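/- Let R = ℚ[y,z] and take a₁ = −3(y+z), b₁ = 0, a₂ = 3(y² + yz + z²), b₂ = 0 in the rank-4 folded Koszul complex. Then the odd homology ker d¹/im d⁰ vanishes, and the even homology ker d⁰/im d¹ is generated as an R-module by the class of |11⟩ and is isomorphic as an R-module to ℚ[y,z]/(y + z, y² + yz + z²), a quotient which is in turn isomorphic as a ℚ-algebra to ℚ[y]/(y²). -/

import Mathlib

set_option synthInstance.maxHeartbeats 1000000
set_option maxHeartbeats 1000000

/-- The differential `d⁰` of the rank-4 folded Koszul complex (tensor product of the
two-periodic factorizations `(a₁,b₁)` and `(a₂,b₂)`), from the even part (free on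
`|00⟩, |11⟩`, an element `(x, y)` standing for `x|00⟩ + y|11⟩`) to the odd part
(free on `|01⟩, |10⟩`, an element `(u, v)` standing for `u|01⟩ + v|10⟩`):
`d⁰(|00⟩) = a₁|10⟩ + a₂|01⟩`, `d⁰(|11⟩) = b₂|10⟩ − b₁|01⟩`. -/
noncomputable def rank4d0 {R : Type*} [CommRing R] (a₁ b₁ a₂ b₂ : R) :
    (R × R) →ₗ[R] (R × R) where
  toFun p := (a₂ * p.1 - b₁ * p.2, a₁ * p.1 + b₂ * p.2)
  map_add' p q := by
    ext <;> simp <;> ring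
  map_smul' r p := by
    ext <;> simp <;> ring

/-- The differential `d¹` of the rank-4 folded Koszul complex, from the odd part to the
even part: `d¹(|01⟩) = b₂|00⟩ − a₁|11⟩`, `d¹(|10⟩) = b₁|00⟩ + a₂|11⟩`. -/
noncomputable def rank4d1 {R : Type*} [CommRing R] (a₁ b₁ a₂ b₂ : R) :
    (R × R) →ₗ[R] (R × R) where
  toFun p := (b₂ * p.1 + b₁ * p.2, -(a₁ * p.1) + a₂ * p.2)
  map_add' p q := by
    ext <;> simp <;> ring
  map_smul' r p := by
    ext <;> simp <;> ring

/-- The even homology `ker d⁰ / im d¹` of the rank-4 folded Koszul complex. -/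
noncomputable abbrev rank4EvenHomology {R : Type*} [CommRing R] (a₁ b₁ a₂ b₂ : R) :=
  LinearMap.ker (rank4d0 a₁ b₁ a₂ b₂) ⧸
    ((LinearMap.range (rank4d1 a₁ b₁ a₂ b₂)).comap
      (LinearMap.ker (rank4d0 a₁ b₁ a₂ b₂)).subtype)

/-- The odd homology `ker d¹ / im d⁰` of the rank-4 folded Koszul complex. -/
noncomputable abbrev rank4OddHomology {R : Type*} [CommRing R] (a₁ b₁ a₂ b₂ : R) :=
  LinearMap.ker (rank4d1 a₁ b₁ a₂ b₂) ⧸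
    ((LinearMap.range (rank4d0 a₁ b₁ a₂ b₂)).comap
      (LinearMap.ker (rank4d1 a₁ b₁ a₂ b₂)).subtype)

/-!
With `b₁ = b₂ = 0` the differentials are `d⁰(x, w) = (a₂ x, a₁ x)` and
`d¹(u, v) = (0, a₂ v - a₁ u)`. An odd cycle satisfies `a₁ u = a₂ v`; when `a₁` is prime and does
not divide `a₂` (here `a₁ ~ y + z`, which does not divide `y² + yz + z²`) this forces
`(u, v) = t (a₂, a₁)`, a boundary. When `a₂ ≠ 0` the even cycles are exactly `R |11⟩` and the
boundaries are `(a₁, a₂) |11⟩`, so the even homology is `R ⧸ (a₁, a₂)`; the unit factors `±3` do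
not change this ideal. Finally, modulo `y + z` one has `z = -y`, which turns `y² + yz + z²`
into `y²`.
-/

open MvPolynomial

theorem exists_eq_mul_of_mul_eq_mul_of_prime {M : Type*} [CommMonoidWithZero M]
    [IsCancelMulZero M] {a b u v : M} (ha : Prime a) (hab : ¬ a ∣ b) (h : a * u = b * v) :
    ∃ t, u = b * t ∧ v = a * t := by
  obtain ⟨t, rfl⟩ := (ha.dvd_or_dvd ⟨u, h.symm⟩).resolve_left hab
  exact ⟨t, mul_left_cancel₀ ha.ne_zero (by rw [h, mul_left_comm]), rfl⟩

theorem Ideal.span_pair_unit_mul {R : Type*} [CommSemiring R] {u v : R} (hu : IsUnit u)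
    (hv : IsUnit v) (a b : R) : Ideal.span {u * a, v * b} = Ideal.span {a, b} := by
  rw [Ideal.span_insert, Ideal.span_insert, Ideal.span_singleton_mul_left_unit hu,
    Ideal.span_singleton_mul_left_unit hv]

theorem MvPolynomial.prime_X_zero_add_X_one {K : Type*} [CommRing K] [IsDomain K] :
    Prime (X 0 + X 1 : MvPolynomial (Fin 2) K) := by
  rw [← MulEquiv.prime_iff (finSuccEquiv K 1).toMulEquiv]
  have : finSuccEquiv K 1 (X 0 + X 1) = Polynomial.X - Polynomial.C (-X 0) := by
    rw [map_add, finSuccEquiv_X_zero, show (1 : Fin 2) = Fin.succ 0 from rfl,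
      finSuccEquiv_X_succ, map_neg, sub_neg_eq_add]
  exact this ▸ Polynomial.prime_X_sub_C _

noncomputable def MvPolynomial.quotientXZeroAddXOneAlgEquiv (K : Type*) [CommRing K] :
    (MvPolynomial (Fin 2) K ⧸
        Ideal.span {(X 0 + X 1 : MvPolynomial (Fin 2) K), X 0 ^ 2 + X 0 * X 1 + X 1 ^ 2})
      ≃ₐ[K] (Polynomial K ⧸ Ideal.span {(Polynomial.X : Polynomial K) ^ 2}) :=
  AlgEquiv.ofAlgHom
    (Ideal.quotientMapₐ _ (aeval ![Polynomial.X, -Polynomial.X]) <| by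
      rw [Ideal.span_le]
      rintro _ (rfl | rfl) <;>
        rw [SetLike.mem_coe, Ideal.mem_comap, Ideal.mem_span_singleton']
      · exact ⟨0, by simp⟩
      · exact ⟨1, by simp; ring⟩)
    (Ideal.quotientMapₐ _ (Polynomial.aeval (X 0)) <| by
      rw [Ideal.span_le, Set.singleton_subset_iff, SetLike.mem_coe, Ideal.mem_comap,
        Ideal.mem_span_pair]
      exact ⟨-X 1, 1, by simp; ring⟩)
    (Ideal.Quotient.algHom_ext _ (Polynomial.algHom_ext (by simp)))
    (Ideal.Quotient.algHom_ext _ <| MvPolynomial.algHom_ext fun i => by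
      fin_cases i
      · simp
      · simp only [Fin.mk_one, AlgHom.comp_apply, Ideal.Quotient.mkₐ_eq_mk,
          Ideal.quotient_map_mkₐ, aeval_X, Matrix.cons_val_one, Matrix.cons_val_fin_one,
          map_neg, Polynomial.aeval_X, AlgHom.coe_id, id_eq]
        rw [← map_neg, Ideal.Quotient.mk_eq_mk_iff_sub_mem,
          show -X 0 - X 1 = -(X 0 + X 1 : MvPolynomial (Fin 2) K) by ring]
        exact neg_mem (Ideal.subset_span (Set.mem_insert _ _)))

section FoldedKoszul

variable {R : Type*} [CommRing R] {a₁ a₂ : R}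

@[simp] theorem rank4d0_apply (a₁ b₁ a₂ b₂ : R) (p : R × R) :
    rank4d0 a₁ b₁ a₂ b₂ p = (a₂ * p.1 - b₁ * p.2, a₁ * p.1 + b₂ * p.2) := rfl

@[simp] theorem rank4d1_apply (a₁ b₁ a₂ b₂ : R) (p : R × R) :
    rank4d1 a₁ b₁ a₂ b₂ p = (b₂ * p.1 + b₁ * p.2, -(a₁ * p.1) + a₂ * p.2) := rfl

theorem subsingleton_rank4OddHomology [IsDomain R] (ha₁ : Prime a₁) (hdvd : ¬ a₁ ∣ a₂) :
    Subsingleton (rank4OddHomology a₁ 0 a₂ 0) := by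
  rw [Submodule.Quotient.subsingleton_iff, Submodule.eq_top_iff']
  rintro ⟨⟨u, v⟩, huv⟩
  have hcycle : a₁ * u = a₂ * v := by
    simpa [neg_add_eq_zero] using congrArg Prod.snd (LinearMap.mem_ker.1 huv)
  obtain ⟨t, rfl, rfl⟩ := exists_eq_mul_of_mul_eq_mul_of_prime ha₁ hdvd hcycle
  exact ⟨(t, 0), by simp⟩

theorem mem_ker_rank4d0_iff [IsDomain R] (ha₂ : a₂ ≠ 0) {p : R × R} :
    p ∈ LinearMap.ker (rank4d0 a₁ 0 a₂ 0) ↔ p.1 = 0 := by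
  refine ⟨fun hp => ?_, fun hp => by simp [hp]⟩
  simpa [ha₂] using congrArg Prod.fst (LinearMap.mem_ker.1 hp)

theorem mem_range_rank4d1_iff {p : R × R} :
    p ∈ LinearMap.range (rank4d1 a₁ 0 a₂ 0) ↔ p.1 = 0 ∧ p.2 ∈ Ideal.span {a₁, a₂} := by
  rw [Ideal.mem_span_pair]
  constructor
  · rintro ⟨⟨u, v⟩, rfl⟩
    exact ⟨by simp, -u, v, by simp; ring⟩
  · rintro ⟨h₁, u, v, h₂⟩
    exact ⟨(-u, v), Prod.ext (by simp [h₁]) (by simp [← h₂]; ring)⟩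

noncomputable def rank4d0KerEquiv [IsDomain R] (ha₂ : a₂ ≠ 0) :
    R ≃ₗ[R] LinearMap.ker (rank4d0 a₁ 0 a₂ 0) where
  toFun t := ⟨(0, t), (mem_ker_rank4d0_iff ha₂).2 rfl⟩
  invFun p := p.1.2
  map_add' _ _ := Subtype.ext (by simp)
  map_smul' _ _ := Subtype.ext (by simp)
  left_inv _ := rfl
  right_inv p := Subtype.ext (Prod.ext ((mem_ker_rank4d0_iff ha₂).1 p.2).symm rfl)

noncomputable def rank4EvenHomologyEquiv [IsDomain R] (ha₂ : a₂ ≠ 0) :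
    rank4EvenHomology a₁ 0 a₂ 0 ≃ₗ[R] R ⧸ Ideal.span {a₁, a₂} :=
  Submodule.Quotient.equiv _ _ (rank4d0KerEquiv ha₂).symm <| by
    ext t
    rw [Submodule.map_equiv_eq_comap_symm, LinearEquiv.symm_symm, Submodule.mem_comap,
      Submodule.mem_comap, mem_range_rank4d1_iff]
    exact and_iff_right rfl

theorem rank4EvenHomology_span_mk_eq_top [IsDomain R] (ha₂ : a₂ ≠ 0)
    (h : ((0, 1) : R × R) ∈ LinearMap.ker (rank4d0 a₁ 0 a₂ 0)) :
    Submodule.span R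
      {(Submodule.Quotient.mk ⟨_, h⟩ : rank4EvenHomology a₁ 0 a₂ 0)} = ⊤ := by
  rw [Submodule.span_singleton_eq_top_iff]
  intro v
  obtain ⟨⟨p, hp⟩, rfl⟩ := Submodule.Quotient.mk_surjective _ v
  refine ⟨p.2, ?_⟩
  rw [← Submodule.Quotient.mk_smul]
  congr 1
  exact Subtype.ext (Prod.ext (by simp [(mem_ker_rank4d0_iff ha₂).1 hp]) (by simp))

end FoldedKoszul

/-- For `R = ℚ[y,z]` and the rank-4 folded Koszul complex with
`a₁ = −3(y+z)`, `b₁ = 0`, `a₂ = 3(y² + yz + z²)`, `b₂ = 0`: the odd homology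
`ker d¹/im d⁰` vanishes, and the even homology `ker d⁰/im d¹` is generated as an
`R`-module by the class of `|11⟩` and is isomorphic as an `R`-module to
`ℚ[y,z]/(y + z, y² + yz + z²)`, a quotient which is in turn isomorphic as a
`ℚ`-algebra to `ℚ[y]/(y²)`. -/
theorem homology_of_G1 (y z : MvPolynomial (Fin 2) ℚ)
    (hy : y = MvPolynomial.X 0) (hz : z = MvPolynomial.X 1) :
    Subsingleton (rank4OddHomology (-3 * (y + z)) 0 (3 * (y ^ 2 + y * z + z ^ 2)) 0) ∧
    (∃ h : ((0, 1) : MvPolynomial (Fin 2) ℚ × MvPolynomial (Fin 2) ℚ) ∈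
        LinearMap.ker (rank4d0 (-3 * (y + z)) 0 (3 * (y ^ 2 + y * z + z ^ 2)) 0),
      Submodule.span (MvPolynomial (Fin 2) ℚ)
          {(Submodule.Quotient.mk ⟨_, h⟩ :
            rank4EvenHomology (-3 * (y + z)) 0 (3 * (y ^ 2 + y * z + z ^ 2)) 0)} = ⊤ ∧
      Nonempty (rank4EvenHomology (-3 * (y + z)) 0 (3 * (y ^ 2 + y * z + z ^ 2)) 0
          ≃ₗ[MvPolynomial (Fin 2) ℚ]
        (MvPolynomial (Fin 2) ℚ ⧸ Ideal.span {y + z, y ^ 2 + y * z + z ^ 2}))) ∧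
    Nonempty ((MvPolynomial (Fin 2) ℚ ⧸ Ideal.span {y + z, y ^ 2 + y * z + z ^ 2})
        ≃ₐ[ℚ] (Polynomial ℚ ⧸ Ideal.span {(Polynomial.X : Polynomial ℚ) ^ 2})) := by
  subst hy hz
  have h3 : IsUnit (3 : MvPolynomial (Fin 2) ℚ) := by
    have h := (isUnit_iff_ne_zero.2 (three_ne_zero : (3 : ℚ) ≠ 0)).map (C (σ := Fin 2))
    rwa [map_ofNat] at h
  have ha₁ : Prime (-3 * (X 0 + X 1) : MvPolynomial (Fin 2) ℚ) :=
    prime_mul_iff.2 (Or.inr ⟨h3.neg, prime_X_zero_add_X_one⟩)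
  have hdvd : ¬ (-3 * (X 0 + X 1) : MvPolynomial (Fin 2) ℚ) ∣
      3 * (X 0 ^ 2 + X 0 * X 1 + X 1 ^ 2) := fun h => by
    simpa using map_dvd (eval ![1, -1]) h
  have ha₂ : (3 * (X 0 ^ 2 + X 0 * X 1 + X 1 ^ 2) : MvPolynomial (Fin 2) ℚ) ≠ 0 := by
    intro h
    have h' := congrArg (eval ![1, 1]) h
    norm_num at h'
  have hmem := (mem_ker_rank4d0_iff (a₁ := -3 * (X 0 + X 1)) ha₂ (p := (0, 1))).2 rfl
  refine ⟨subsingleton_rank4OddHomology ha₁ hdvd,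
    ⟨hmem, rank4EvenHomology_span_mk_eq_top ha₂ hmem, ?_⟩, ⟨quotientXZeroAddXOneAlgEquiv ℚ⟩⟩
  rw [← Ideal.span_pair_unit_mul h3.neg h3]
  exact ⟨rank4EvenHomologyEquiv ha₂⟩
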